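/- arXiv:2106.10895 — 4 statements merged into one kernel-verified Lean document; each statement's English description precedes it below -/
import Mathlib

section
/- Counterexample to the Levi-type refinement property for gluing of iposets: there exist iposets P : 0 → 1, U : 0 → 1, V : 1 → 0 with P * V ≅ U * V but such that there is no iposet R with P * R ≅ U and no iposet R with U * R ≅ P. (Take P with points a < b and incomparable target point c with t(1)=c; U with a < b, t(1)=b, and an incomparable point c; V with points d < e, s(1)=d.) -/
/-- Interval order condition for a strict order relation. -/
def IsIntervalOrderRel {α : Type} (lt : α → α → Prop) : Prop :=
  ∀ w x y z, lt w y → lt x z → lt w z ∨ lt x y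

/-- Serial composition (ordinal sum) of two strict orders. -/
def serialLt {α β : Type} (r : α → α → Prop) (s : β → β → Prop) :
    α ⊕ β → α ⊕ β → Prop
  | .inl a, .inl b => r a b
  | .inr a, .inr b => s a b
  | .inl _, .inr _ => True
  | .inr _, .inl _ => False

/-- Parallel composition (disjoint union) of two strict orders. -/
def parallelLt {α β : Type} (r : α → α → Prop) (s : β → β → Prop) :
    α ⊕ β → α ⊕ β → Prop
  | .inl a, .inl b => r a b
  | .inr a, .inr b => s a b
  | _, _ => False

/-- A poset with interfaces: a finite strict poset with injective interface
maps from the discrete posets `[n]` (onto minimal elements) and `[m]` (onto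
maximal elements). -/
structure Iposet (n m : ℕ) where
  carrier : Type
  fin : Finite carrier
  lt : carrier → carrier → Prop
  irrefl : ∀ x, ¬ lt x x
  trans : ∀ x y z, lt x y → lt y z → lt x z
  s : Fin n → carrier
  t : Fin m → carrier
  s_inj : Function.Injective s
  t_inj : Function.Injective t
  s_min : ∀ i x, ¬ lt x (s i)
  t_max : ∀ i x, ¬ lt (t i) x

namespace Iposet

/-- Parallel composition of iposets. -/
def par {n₁ m₁ n₂ m₂ : ℕ} (P : Iposet n₁ m₁) (Q : Iposet n₂ m₂) :
    Iposet (n₁ + n₂) (m₁ + m₂) where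
  carrier := P.carrier ⊕ Q.carrier
  fin := by have := P.fin; have := Q.fin; exact inferInstance
  lt a b := match a, b with
    | .inl x, .inl y => P.lt x y
    | .inr x, .inr y => Q.lt x y
    | _, _ => False
  irrefl := by
    rintro (x | x) h
    · exact P.irrefl x h
    · exact Q.irrefl x h
  trans := by
    rintro (x | x) (y | y) (z | z) h1 h2 <;>
      first
        | exact P.trans _ _ _ h1 h2
        | exact Q.trans _ _ _ h1 h2
        | exact h1.elim
        | exact h2.elim
  s := fun i =>
    if h : (i : ℕ) < n₁ then .inl (P.s ⟨i, h⟩)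
    else .inr (Q.s ⟨(i : ℕ) - n₁, by have := i.isLt; omega⟩)
  t := fun i =>
    if h : (i : ℕ) < m₁ then .inl (P.t ⟨i, h⟩)
    else .inr (Q.t ⟨(i : ℕ) - m₁, by have := i.isLt; omega⟩)
  s_inj := by
    intro i j h
    rcases Nat.lt_or_ge (i : ℕ) n₁ with hi | hi <;>
      rcases Nat.lt_or_ge (j : ℕ) n₁ with hj | hj
    · simp only [dif_pos hi, dif_pos hj] at h
      have h2 := P.s_inj (Sum.inl.inj h)
      simp only [Fin.mk.injEq] at h2
      exact Fin.ext h2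
    · simp only [dif_pos hi, dif_neg (Nat.not_lt.mpr hj)] at h
      exact absurd h (by simp)
    · simp only [dif_neg (Nat.not_lt.mpr hi), dif_pos hj] at h
      exact absurd h (by simp)
    · simp only [dif_neg (Nat.not_lt.mpr hi), dif_neg (Nat.not_lt.mpr hj)] at h
      have h2 := Q.s_inj (Sum.inr.inj h)
      simp only [Fin.mk.injEq] at h2
      exact Fin.ext (by omega)
  t_inj := by
    intro i j h
    rcases Nat.lt_or_ge (i : ℕ) m₁ with hi | hi <;>
      rcases Nat.lt_or_ge (j : ℕ) m₁ with hj | hj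
    · simp only [dif_pos hi, dif_pos hj] at h
      have h2 := P.t_inj (Sum.inl.inj h)
      simp only [Fin.mk.injEq] at h2
      exact Fin.ext h2
    · simp only [dif_pos hi, dif_neg (Nat.not_lt.mpr hj)] at h
      exact absurd h (by simp)
    · simp only [dif_neg (Nat.not_lt.mpr hi), dif_pos hj] at h
      exact absurd h (by simp)
    · simp only [dif_neg (Nat.not_lt.mpr hi), dif_neg (Nat.not_lt.mpr hj)] at h
      have h2 := Q.t_inj (Sum.inr.inj h)
      simp only [Fin.mk.injEq] at h2
      exact Fin.ext (by omega)
  s_min := by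
    intro i a
    rcases Nat.lt_or_ge (i : ℕ) n₁ with hi | hi
    · simp only [dif_pos hi]
      rcases a with x | x
      · exact P.s_min _ x
      · exact fun h => h
    · simp only [dif_neg (Nat.not_lt.mpr hi)]
      rcases a with x | x
      · exact fun h => h
      · exact Q.s_min _ x
  t_max := by
    intro i a
    rcases Nat.lt_or_ge (i : ℕ) m₁ with hi | hi
    · simp only [dif_pos hi]
      rcases a with x | x
      · exact P.t_max _ x
      · exact fun h => h
    · simp only [dif_neg (Nat.not_lt.mpr hi)]
      rcases a with x | x
      · exact fun h => h
      · exact Q.t_max _ x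

open Classical in
/-- Gluing composition of iposets: targets of `P` are identified with sources
of `Q`, and every non-target point of `P` is ordered below every non-source
point of `Q`. -/
noncomputable def glue {n m k : ℕ} (P : Iposet n m) (Q : Iposet m k) :
    Iposet n k where
  carrier := P.carrier ⊕ {q : Q.carrier // ¬ ∃ j, Q.s j = q}
  fin := by have := P.fin; have := Q.fin; exact inferInstance
  lt a b := match a, b with
    | .inl x, .inl y => P.lt x y
    | .inl x, .inr q => (¬ ∃ i, P.t i = x) ∨ (∃ i, P.t i = x ∧ Q.lt (Q.s i) q.val)
    | .inr p, .inr q => Q.lt p.val q.val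
    | .inr _, .inl _ => False
  irrefl := by
    rintro (x | q) h
    · exact P.irrefl x h
    · exact Q.irrefl q.val h
  trans := by
    rintro (x | x) (y | y) (z | z) h1 h2
    · exact P.trans _ _ _ h1 h2
    · left; rintro ⟨j, rfl⟩; exact P.t_max j y h1
    · exact h2.elim
    · rcases h1 with h1 | ⟨i, hi, hlt⟩
      · exact Or.inl h1
      · exact Or.inr ⟨i, hi, Q.trans _ _ _ hlt h2⟩
    · exact h1.elim
    · exact h1.elim
    · exact h2.elim
    · exact Q.trans _ _ _ h1 h2
  s := fun i => .inl (P.s i)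
  t := fun i =>
    if h : ∃ j, Q.s j = Q.t i then .inl (P.t h.choose) else .inr ⟨Q.t i, h⟩
  s_inj := fun i j h => P.s_inj (Sum.inl.inj h)
  t_inj := by
    intro i j h
    by_cases hi : ∃ a, Q.s a = Q.t i <;> by_cases hj : ∃ a, Q.s a = Q.t j
    · simp only [dif_pos hi, dif_pos hj] at h
      have h2 := P.t_inj (Sum.inl.inj h)
      apply Q.t_inj
      rw [← hi.choose_spec, ← hj.choose_spec, h2]
    · simp only [dif_pos hi, dif_neg hj] at h
      exact absurd h (by simp)
    · simp only [dif_neg hi, dif_pos hj] at h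
      exact absurd h (by simp)
    · simp only [dif_neg hi, dif_neg hj, Sum.inr.injEq, Subtype.mk.injEq] at h
      exact Q.t_inj h
  s_min := by
    rintro i (x | q) h
    · exact P.s_min i x h
    · exact h
  t_max := by
    intro i a
    by_cases hi : ∃ j, Q.s j = Q.t i
    · simp only [dif_pos hi]
      rcases a with x | q
      · exact P.t_max _ x
      · rintro (h | ⟨i', hi', hlt⟩)
        · exact h ⟨hi.choose, rfl⟩
        · have he : i' = hi.choose := P.t_inj hi'
          subst he
          rw [hi.choose_spec] at hlt
          exact Q.t_max i q.val hlt
    · simp only [dif_neg hi]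
      rcases a with x | q
      · exact fun h => h
      · exact fun h => Q.t_max i q.val h

/-- The empty iposet. -/
def ipoEmpty : Iposet 0 0 where
  carrier := PEmpty
  fin := inferInstance
  lt _ _ := False
  irrefl _ h := h
  trans := by intro x; exact x.elim
  s := Fin.elim0
  t := Fin.elim0
  s_inj := by intro i; exact i.elim0
  t_inj := by intro i; exact i.elim0
  s_min := fun i => i.elim0
  t_max := fun i => i.elim0

/-- The singleton iposet with empty source and empty target interface. -/
def ipo00 : Iposet 0 0 where
  carrier := PUnit
  fin := inferInstance
  lt _ _ := False
  irrefl _ h := h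
  trans := by intro _ _ _ h; exact h.elim
  s := Fin.elim0
  t := Fin.elim0
  s_inj := by intro i; exact i.elim0
  t_inj := by intro i; exact i.elim0
  s_min := fun i => i.elim0
  t_max := fun i => i.elim0

/-- The singleton iposet with empty source and full target interface. -/
def ipo01 : Iposet 0 1 where
  carrier := PUnit
  fin := inferInstance
  lt _ _ := False
  irrefl _ h := h
  trans := by intro _ _ _ h; exact h.elim
  s := Fin.elim0
  t := fun _ => PUnit.unit
  s_inj := by intro i; exact i.elim0
  t_inj := by intro i j _; exact Subsingleton.elim i j
  s_min := fun i => i.elim0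
  t_max := fun _ _ h => h

/-- The singleton iposet with full source and empty target interface. -/
def ipo10 : Iposet 1 0 where
  carrier := PUnit
  fin := inferInstance
  lt _ _ := False
  irrefl _ h := h
  trans := by intro _ _ _ h; exact h.elim
  s := fun _ => PUnit.unit
  t := Fin.elim0
  s_inj := by intro i j _; exact Subsingleton.elim i j
  t_inj := by intro i; exact i.elim0
  s_min := fun _ _ h => h
  t_max := fun i => i.elim0

/-- The singleton iposet with full source and full target interface. -/
def ipo11 : Iposet 1 1 where
  carrier := PUnit
  fin := inferInstance
  lt _ _ := False
  irrefl _ h := h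
  trans := by intro _ _ _ h; exact h.elim
  s := fun _ => PUnit.unit
  t := fun _ => PUnit.unit
  s_inj := by intro i j _; exact Subsingleton.elim i j
  t_inj := by intro i j _; exact Subsingleton.elim i j
  s_min := fun _ _ h => h
  t_max := fun _ _ h => h

/-- The identity iposet `n → n`: the discrete poset on `n` points with both
interface maps the identity. -/
def ipoId (n : ℕ) : Iposet n n where
  carrier := Fin n
  fin := inferInstance
  lt _ _ := False
  irrefl _ h := h
  trans := by intro _ _ _ h; exact h.elim
  s := id
  t := id
  s_inj := fun _ _ h => h
  t_inj := fun _ _ h => h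
  s_min := fun _ _ h => h
  t_max := fun _ _ h => h

/-- Isomorphism of iposets: an order-preserving and order-reflecting bijection
commuting with the interface maps (the interface arities must agree). -/
def Iso {n m n' m' : ℕ} (P : Iposet n m) (Q : Iposet n' m') : Prop :=
  n = n' ∧ m = m' ∧
  ∃ f : P.carrier ≃ Q.carrier,
    (∀ x y, P.lt x y ↔ Q.lt (f x) (f y)) ∧
    (∀ (i : Fin n) (j : Fin n'), (i : ℕ) = (j : ℕ) → f (P.s i) = Q.s j) ∧
    (∀ (i : Fin m) (j : Fin m'), (i : ℕ) = (j : ℕ) → f (P.t i) = Q.t j)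

/-- `Subsu P Q` : `P` is subsumed by `Q`, i.e. there is an interface-preserving
order-reflecting bijection from `P` to `Q`. -/
def Subsu {n m : ℕ} (P Q : Iposet n m) : Prop :=
  ∃ f : P.carrier ≃ Q.carrier,
    (∀ x y, Q.lt (f x) (f y) → P.lt x y) ∧
    (∀ i, f (P.s i) = Q.s i) ∧ (∀ i, f (P.t i) = Q.t i)

/-- Isomorphism of the underlying posets, ignoring interfaces. -/
def PosetIso {n m n' m' : ℕ} (P : Iposet n m) (Q : Iposet n' m') : Prop :=
  ∃ f : P.carrier ≃ Q.carrier, ∀ x y, P.lt x y ↔ Q.lt (f x) (f y)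

/-- An iposet is discrete if its order relation is empty. -/
def IsDiscrete {n m : ℕ} (P : Iposet n m) : Prop := ∀ x y, ¬ P.lt x y

/-- A starter is a discrete iposet whose target interface map is bijective. -/
def IsStarter {n m : ℕ} (P : Iposet n m) : Prop :=
  IsDiscrete P ∧ Function.Bijective P.t

/-- A terminator is a discrete iposet whose source interface map is bijective. -/
def IsTerminator {n m : ℕ} (P : Iposet n m) : Prop :=
  IsDiscrete P ∧ Function.Bijective P.s

/-- A symmetry is a discrete iposet with both interface maps bijective. -/
def IsSymmetry {n m : ℕ} (P : Iposet n m) : Prop :=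
  IsDiscrete P ∧ Function.Bijective P.s ∧ Function.Bijective P.t

/-- Interface consistency: for points lying in both interfaces, the numbering
of the source interface agrees with that of the target interface. -/
def InterfaceConsistent {n m : ℕ} (P : Iposet n m) : Prop :=
  ∀ (i j : Fin n) (i' j' : Fin m),
    P.s i = P.t i' → P.s j = P.t j' → ((i : ℕ) < (j : ℕ) ↔ (i' : ℕ) < (j' : ℕ))

/-- An iposet is connected if its underlying poset is nonempty and any two
points are joined by a zigzag of order relations. -/
def Connected {n m : ℕ} (P : Iposet n m) : Prop :=
  Nonempty P.carrier ∧
    ∀ x y, Relation.ReflTransGen (fun a b => P.lt a b ∨ P.lt b a) x y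

/-- The interval order condition on the underlying poset of an iposet. -/
def IsIntervalOrder {n m : ℕ} (P : Iposet n m) : Prop :=
  ∀ w x y z, P.lt w y → P.lt x z → P.lt w z ∨ P.lt x y

/-- The class of gluing-parallel iposets: generated (up to isomorphism) from
the empty iposet and the four singleton iposets by gluing and parallel
composition. -/
inductive IsGP : {n m : ℕ} → Iposet n m → Prop
  | empty : IsGP ipoEmpty
  | s00 : IsGP ipo00
  | s01 : IsGP ipo01
  | s10 : IsGP ipo10
  | s11 : IsGP ipo11
  | glue {n m k : ℕ} {P : Iposet n m} {Q : Iposet m k} :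
      IsGP P → IsGP Q → IsGP (P.glue Q)
  | par {n₁ m₁ n₂ m₂ : ℕ} {P : Iposet n₁ m₁} {Q : Iposet n₂ m₂} :
      IsGP P → IsGP Q → IsGP (P.par Q)
  | iso {n m n' m' : ℕ} {P : Iposet n m} {Q : Iposet n' m'} :
      IsGP P → Iso P Q → IsGP Q

/-- The ⊗-closure of the four singleton iposets (up to isomorphism):
parallel compositions of finitely many singletons. -/
inductive InParSingles : {n m : ℕ} → Iposet n m → Prop
  | s00 : InParSingles ipo00
  | s01 : InParSingles ipo01
  | s10 : InParSingles ipo10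
  | s11 : InParSingles ipo11
  | par {n₁ m₁ n₂ m₂ : ℕ} {P : Iposet n₁ m₁} {Q : Iposet n₂ m₂} :
      InParSingles P → InParSingles Q → InParSingles (P.par Q)
  | iso {n m n' m' : ℕ} {P : Iposet n m} {Q : Iposet n' m'} :
      InParSingles P → Iso P Q → InParSingles Q

/-- The induced subiposet of a poset (iposet with empty interfaces) on a
subset of its points. -/
def restrict (P : Iposet 0 0) (A : Set P.carrier) : Iposet 0 0 where
  carrier := {x : P.carrier // x ∈ A}
  fin := by have := P.fin; exact inferInstance
  lt a b := P.lt a.val b.val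
  irrefl a := P.irrefl a.val
  trans := fun a b c h1 h2 => P.trans _ _ _ h1 h2
  s := Fin.elim0
  t := Fin.elim0
  s_inj := by intro i; exact i.elim0
  t_inj := by intro i; exact i.elim0
  s_min := fun i => i.elim0
  t_max := fun i => i.elim0

end Iposet

/-!
In `P * V` the source point `d` of `V` is identified with the target of `P` and every other
point of `P` is put below `e`; since `d < e` already, the result does not depend on where the
target of `P` sits, which makes `P * V ≅ U * V`. Conversely, `P`, `U` both have three points,
so a refinement `P * R ≅ U` (or `U * R ≅ P`) cannot add points: every point of `R` is a source,
and the target of `P * R` is the target of `P`, with the same points below it. But the target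
of `P` is minimal and that of `U` is not.
-/

namespace Iposet

variable {n m k : ℕ}

def IsMinPoint (P : Iposet n m) (x : P.carrier) : Prop := ∀ y, ¬ P.lt y x

theorem Iso.isMinPoint_t_iff {n' m' : ℕ} {P : Iposet n m} {Q : Iposet n' m'} (h : Iso P Q)
    (i : Fin m) (j : Fin m') (hij : (i : ℕ) = (j : ℕ)) :
    P.IsMinPoint (P.t i) ↔ Q.IsMinPoint (Q.t j) := by
  obtain ⟨-, -, f, hlt, -, ht⟩ := h
  rw [← ht i j hij]
  exact ⟨fun hx y hy => hx (f.symm y) ((hlt _ _).2 (by rwa [f.apply_symm_apply])),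
    fun hx y hy => hx (f y) ((hlt _ _).1 hy)⟩

theorem isMinPoint_glue_inl {P : Iposet n m} {Q : Iposet m k} (x : P.carrier) :
    (P.glue Q).IsMinPoint (.inl x) ↔ P.IsMinPoint x := by
  refine ⟨fun hx y hy => hx (.inl y) hy, ?_⟩
  rintro hx (y | q) hy
  · exact hx y hy
  · exact hy

theorem glue_t_of_s_eq_t {P : Iposet n m} {Q : Iposet m k} {i : Fin k} {j : Fin m}
    (hij : Q.s j = Q.t i) : (P.glue Q).t i = .inl (P.t j) := by
  have hex : ∃ j, Q.s j = Q.t i := ⟨j, hij⟩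
  have hchoose : hex.choose = j := Q.s_inj (hex.choose_spec.trans hij.symm)
  simp only [glue, dif_pos hex, hchoose]

/-- Gluing only adds the non-source points of the right factor. -/
theorem exists_s_eq_of_card_glue_le {P : Iposet n m} {Q : Iposet m k}
    (hcard : Nat.card (P.glue Q).carrier ≤ Nat.card P.carrier) (y : Q.carrier) :
    ∃ j, Q.s j = y := by
  by_contra hy
  have := P.fin
  have := Q.fin
  have hsum : Nat.card (P.glue Q).carrier =
      Nat.card P.carrier + Nat.card {q : Q.carrier // ¬ ∃ j, Q.s j = q} := Nat.card_sum
  have hpos : 0 < Nat.card {q : Q.carrier // ¬ ∃ j, Q.s j = q} :=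
    Nat.card_pos_iff.2 ⟨⟨⟨y, hy⟩⟩, inferInstance⟩
  omega

theorem exists_isMinPoint_t_iff_of_iso_glue {P : Iposet n m} {R : Iposet m k}
    {U : Iposet n k} (h : Iso (P.glue R) U) (hcard : Nat.card U.carrier ≤ Nat.card P.carrier)
    (i : Fin k) : ∃ j, (P.IsMinPoint (P.t j) ↔ U.IsMinPoint (U.t i)) := by
  have ⟨_, _, f, _⟩ := h
  obtain ⟨j, hj⟩ := exists_s_eq_of_card_glue_le ((Nat.card_congr f).trans_le hcard) (R.t i)
  refine ⟨j, ?_⟩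
  rw [← isMinPoint_glue_inl (Q := R), ← glue_t_of_s_eq_t hj]
  exact h.isMinPoint_t_iff i i rfl

theorem not_iso_glue_of_isMinPoint_t {P U : Iposet n 1}
    (hcard : Nat.card U.carrier ≤ Nat.card P.carrier)
    (hmin : ¬ (P.IsMinPoint (P.t 0) ↔ U.IsMinPoint (U.t 0))) :
    ¬ ∃ R : Iposet 1 1, Iso (P.glue R) U := by
  rintro ⟨R, h⟩
  obtain ⟨j, hj⟩ := exists_isMinPoint_t_iff_of_iso_glue h hcard 0
  rw [Subsingleton.elim j 0] at hj
  exact hmin hj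

theorem glue_lt_inl_inr {P : Iposet n m} {Q : Iposet m k} (x : P.carrier)
    (q : {q : Q.carrier // ¬ ∃ j, Q.s j = q}) (hq : ∀ j, Q.lt (Q.s j) q.val) :
    (P.glue Q).lt (.inl x) (.inr q) := by
  by_cases hx : ∃ i, P.t i = x
  · obtain ⟨i, hi⟩ := hx
    exact Or.inr ⟨i, hi, hq i⟩
  · exact Or.inl hx

/-- If the sources of `Q` lie below all its other points, `P * Q` forgets the targets of `P`. -/
theorem iso_glue_of_s_lt {P U : Iposet n m} {Q : Iposet m k} (e : P.carrier ≃ U.carrier)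
    (hlt : ∀ x y, P.lt x y ↔ U.lt (e x) (e y)) (hs : ∀ i, e (P.s i) = U.s i)
    (hQ : ∀ j q, (¬ ∃ i, Q.s i = q) → Q.lt (Q.s j) q) (hst : ∀ i j, Q.s j ≠ Q.t i) :
    Iso (P.glue Q) (U.glue Q) := by
  refine ⟨rfl, rfl, e.sumCongr (Equiv.refl _), ?_, ?_, ?_⟩
  · rintro (x | p) (y | q)
    · exact hlt x y
    · have hq : ∀ j, Q.lt (Q.s j) q.val := fun j => hQ j q.val q.prop
      exact iff_of_true (glue_lt_inl_inr x q hq) (glue_lt_inl_inr (e x) q hq)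
    · exact Iff.rfl
    · exact Iff.rfl
  · rintro i j hij
    obtain rfl := Fin.ext hij
    exact congrArg Sum.inl (hs i)
  · rintro i j hij
    obtain rfl := Fin.ext hij
    have hnt : ¬ ∃ j, Q.s j = Q.t i := fun ⟨j, hj⟩ => hst i j hj
    simp only [glue, dif_neg hnt]
    rfl

def arrowWithPoint (x : Fin 3) (hx : x ≠ 0) : Iposet 0 1 where
  carrier := Fin 3
  fin := inferInstance
  lt a b := a = 0 ∧ b = 1
  irrefl := by decide
  trans := by decide
  s := Fin.elim0
  t := fun _ => x
  s_inj := fun i => i.elim0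
  t_inj := fun i j _ => Subsingleton.elim i j
  s_min := fun i => i.elim0
  t_max := fun _ y h => hx h.1

def arrowFromSource : Iposet 1 0 where
  carrier := Fin 2
  fin := inferInstance
  lt a b := a = 0 ∧ b = 1
  irrefl := by decide
  trans := by decide
  s := fun _ => 0
  t := Fin.elim0
  s_inj := fun i j _ => Subsingleton.elim i j
  t_inj := fun i => i.elim0
  s_min := by decide
  t_max := fun i => i.elim0

theorem arrowFromSource_s_lt (j : Fin 1) (q : arrowFromSource.carrier)
    (hq : ¬ ∃ i, arrowFromSource.s i = q) : arrowFromSource.lt (arrowFromSource.s j) q :=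
  ⟨rfl, Fin.eq_one_of_ne_zero q fun h => hq ⟨0, h.symm⟩⟩

theorem isMinPoint_arrowWithPoint_t_iff (x : Fin 3) (hx : x ≠ 0) :
    (arrowWithPoint x hx).IsMinPoint ((arrowWithPoint x hx).t 0) ↔ x ≠ 1 := by
  simp [IsMinPoint, arrowWithPoint]

end Iposet

open Iposet in
/-- Counterexample to the Levi-type refinement property for gluing of
iposets. -/
theorem levi_refinement_fails :
    ∃ (P U : Iposet 0 1) (V : Iposet 1 0),
      Iso (P.glue V) (U.glue V) ∧
      (¬ ∃ R : Iposet 1 1, Iso (P.glue R) U) ∧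
      (¬ ∃ R : Iposet 1 1, Iso (U.glue R) P) := by
  let P := arrowWithPoint 2 (by decide)
  let U := arrowWithPoint 1 (by decide)
  have hmin : ¬ (P.IsMinPoint (P.t 0) ↔ U.IsMinPoint (U.t 0)) := by
    simp only [P, U, isMinPoint_arrowWithPoint_t_iff]
    decide
  refine ⟨P, U, arrowFromSource, ?_, not_iso_glue_of_isMinPoint_t le_rfl hmin,
    not_iso_glue_of_isMinPoint_t le_rfl (mt Iff.symm hmin)⟩
  exact iso_glue_of_s_lt (Equiv.refl _) (fun _ _ => Iff.rfl) finZeroElim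
    arrowFromSource_s_lt (fun i => i.elim0)
end

section
/- Every gluing-parallel iposet is interface consistent: if an iposet is generated from the empty iposet and the four singleton iposets by finitely many gluing and parallel compositions, then for all points x,y lying in both its source and target interface images, s⁻¹(x) < s⁻¹(y) if and only if t⁻¹(x) < t⁻¹(y). -/
open Iposet in
/-- Every gluing-parallel iposet is interface consistent. -/
theorem gp_interface_consistent {n m : ℕ} (P : Iposet n m) (h : IsGP P) :
    InterfaceConsistent P := by
  induction h with
  | empty => intro i; exact i.elim0
  | s00 => intro i; exact i.elim0
  | s01 => intro i; exact i.elim0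
  | s10 => intro i j i'; exact i'.elim0
  | s11 =>
      intro i j i' j' _ _
      have hi := i.isLt; have hj := j.isLt
      have hi' := i'.isLt; have hj' := j'.isLt
      omega
  | glue hP hQ ihP ihQ =>
      rename_i n m k P Q
      intro i j i' j' hi hj
      simp only [Iposet.glue] at hi hj
      by_cases h1 : ∃ a, Q.s a = Q.t i'
      · by_cases h2 : ∃ a, Q.s a = Q.t j'
        · simp only [dif_pos h1, dif_pos h2] at hi hj
          have hi := Sum.inl.inj hi
          have hj := Sum.inl.inj hj
          have e1 := ihP i j h1.choose h2.choose hi hj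
          have e2 := ihQ h1.choose h2.choose i' j' h1.choose_spec h2.choose_spec
          exact e1.trans e2
        · simp only [dif_pos h1, dif_neg h2] at hj
          exact absurd hj (by simp)
      · simp only [dif_neg h1] at hi
        exact absurd hi (by simp)
  | par hP hQ ihP ihQ =>
      rename_i n₁ m₁ n₂ m₂ P Q
      intro i j i' j' hi hj
      simp only [Iposet.par] at hi hj
      split_ifs at hi hj <;>
        simp only [Sum.inl.injEq, Sum.inr.injEq, reduceCtorEq] at hi hj <;>
        first
        | omega
        | exact ihP _ _ _ _ hi hj
        | (have := ihQ _ _ _ _ hi hj; simp only [Fin.lt_iff_val_lt_val] at this; omega)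
  | iso hP hiso ih =>
      rename_i n m n' m' P Q
      obtain ⟨hn, hm, f, hlt, hs, ht⟩ := hiso
      subst hn; subst hm
      intro i j i' j' h1 h2
      have e1 : f (P.s i) = f (P.t i') := by
        rw [hs i i rfl, ht i' i' rfl, h1]
      have e2 : f (P.s j) = f (P.t j') := by
        rw [hs j j rfl, ht j' j' rfl, h2]
      exact ih i j i' j' (f.injective e1) (f.injective e2)
end

section
/- The gluing composition of two interval orders is an interval order: if iposets P : n → m and Q : m → k have underlying posets that are interval orders, then the underlying poset of P * Q is an interval order. -/
open Iposet in
/-- The gluing composition of two interval orders is an interval order. -/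
theorem glue_interval_order {n m k : ℕ} (P : Iposet n m) (Q : Iposet m k)
    (hP : IsIntervalOrder P) (hQ : IsIntervalOrder Q) :
    IsIntervalOrder (P.glue Q) := by
  have hnt : ∀ (a b : P.carrier), P.lt a b → ¬ ∃ i, P.t i = a := by
    rintro a b h ⟨i, rfl⟩; exact P.t_max i b h
  rintro (w|w) (x|x) (y|y) (z|z) h1 h2
  · exact (hP w x y z h1 h2).imp id id
  · exact Or.inl (Or.inl (hnt _ _ h1))
  · exact Or.inr (Or.inl (hnt _ _ h2))
  · -- w x : P, y z : Q
    rcases h1 with h1 | ⟨i, hi, hiy⟩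
    · exact Or.inl (Or.inl h1)
    rcases h2 with h2 | ⟨j, hj, hjz⟩
    · exact Or.inr (Or.inl h2)
    rcases hQ (Q.s i) (Q.s j) y.val z.val hiy hjz with h | h
    · exact Or.inl (Or.inr ⟨i, hi, h⟩)
    · exact Or.inr (Or.inr ⟨j, hj, h⟩)
  · exact h2.elim
  · exact Or.inl (Or.inl (hnt _ _ h1))
  · exact h2.elim
  · -- w : P, x y z : Q
    rcases h1 with h1 | ⟨i, hi, hiy⟩
    · exact Or.inl (Or.inl h1)
    rcases hQ (Q.s i) x.val y.val z.val hiy h2 with h | h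
    · exact Or.inl (Or.inr ⟨i, hi, h⟩)
    · exact Or.inr h
  · exact h1.elim
  · exact h1.elim
  · exact Or.inr (Or.inl (hnt _ _ h2))
  · -- w y z : Q, x : P
    rcases h2 with h2 | ⟨j, hj, hjz⟩
    · exact Or.inr (Or.inl h2)
    rcases hQ w.val (Q.s j) y.val z.val h1 hjz with h | h
    · exact Or.inl h
    · exact Or.inr (Or.inr ⟨j, hj, h⟩)
  · exact h1.elim
  · exact h1.elim
  · exact h2.elim
  · exact (hQ _ _ _ _ h1 h2).imp id id
end

section
/- The class of gluing-parallel posets is closed under induced subposets: if P is a gp-poset and x ∈ P, then P \ {x} with the induced order is again a gp-poset. -/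
/-! Induction along the construction of gp-iposets proves more: every induced sub-iposet of a
gp-iposet is gp, where the sub-iposet on a set `S` of points keeps the interface points lying in
`S`, renumbered in increasing order. Singletons restrict to themselves or to the empty iposet, and
isomorphisms transport restrictions. A restriction of `P.par Q` is the parallel composition of
restrictions of `P` and `Q`. For `P.glue Q`, restrict `P` to its part of `S`, and `Q` to its part
of `S` together with the sources glued to kept targets of `P`: both restrictions keep the same
interface positions, so they can be glued again. -/

namespace OrderEmbedding

variable {a b c d : ℕ}

def finAdd (u : Fin a ↪o Fin c) (v : Fin b ↪o Fin d) : Fin (a + b) ↪o Fin (c + d) :=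
  ofStrictMono (Fin.append (fun i => Fin.castAdd d (u i)) (fun j => Fin.natAdd c (v j))) <| by
    intro i j h
    cases i using Fin.addCases <;> cases j using Fin.addCases <;>
      simp only [Fin.append_left, Fin.append_right, Fin.lt_def, Fin.val_castAdd,
        Fin.val_natAdd] at h ⊢
    · exact u.strictMono h
    · omega
    · omega
    · exact Nat.add_lt_add_left (v.strictMono (Nat.lt_of_add_lt_add_left h)) c

variable (u : Fin a ↪o Fin c) (v : Fin b ↪o Fin d)

@[simp] lemma finAdd_castAdd (i : Fin a) : u.finAdd v (Fin.castAdd b i) = Fin.castAdd d (u i) :=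
  Fin.append_left (fun i => Fin.castAdd d (u i)) (fun j => Fin.natAdd c (v j)) i

@[simp] lemma finAdd_natAdd (j : Fin b) : u.finAdd v (Fin.natAdd a j) = Fin.natAdd c (v j) :=
  Fin.append_right (fun i => Fin.castAdd d (u i)) (fun j => Fin.natAdd c (v j)) j

lemma castAdd_mem_range_finAdd (i : Fin c) :
    Fin.castAdd d i ∈ Set.range (u.finAdd v) ↔ i ∈ Set.range u := by
  constructor
  · rintro ⟨k, hk⟩
    cases k using Fin.addCases <;> simp [Fin.ext_iff] at hk
    · exact ⟨_, Fin.ext hk⟩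
    · omega
  · rintro ⟨k, rfl⟩
    exact ⟨Fin.castAdd b k, by simp⟩

lemma natAdd_mem_range_finAdd (j : Fin d) :
    Fin.natAdd c j ∈ Set.range (u.finAdd v) ↔ j ∈ Set.range v := by
  constructor
  · rintro ⟨k, hk⟩
    cases k using Fin.addCases <;> simp [Fin.ext_iff] at hk
    · omega
    · exact ⟨_, Fin.ext hk⟩
  · rintro ⟨k, rfl⟩
    exact ⟨Fin.natAdd a k, by simp⟩

lemma card_eq_of_range_eq {n : ℕ} {u : Fin a ↪o Fin n} {v : Fin b ↪o Fin n}
    (h : Set.range u = Set.range v) : a = b := by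
  have hu := Nat.card_range_of_injective u.injective
  rw [h, Nat.card_range_of_injective v.injective] at hu
  simpa using hu.symm

end OrderEmbedding

namespace Iposet

section par

variable {n₁ m₁ n₂ m₂ : ℕ} (P : Iposet n₁ m₁) (Q : Iposet n₂ m₂)

@[simp] lemma par_s_castAdd (i : Fin n₁) : (P.par Q).s (Fin.castAdd n₂ i) = .inl (P.s i) := by
  simp [par]

@[simp] lemma par_s_natAdd (i : Fin n₂) : (P.par Q).s (Fin.natAdd n₁ i) = .inr (Q.s i) := by
  simp [par]

@[simp] lemma par_t_castAdd (j : Fin m₁) : (P.par Q).t (Fin.castAdd m₂ j) = .inl (P.t j) := by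
  simp [par]

@[simp] lemma par_t_natAdd (j : Fin m₂) : (P.par Q).t (Fin.natAdd m₁ j) = .inr (Q.t j) := by
  simp [par]

end par

section glue

variable {n m k : ℕ} (P : Iposet n m) (Q : Iposet m k)

lemma glue_t_of_s_eq {i : Fin k} {j : Fin m} (h : Q.s j = Q.t i) :
    (P.glue Q).t i = .inl (P.t j) := by
  have hex : ∃ j, Q.s j = Q.t i := ⟨j, h⟩
  have hj : hex.choose = j := Q.s_inj (hex.choose_spec.trans h.symm)
  exact (dif_pos hex).trans (congrArg (fun j => Sum.inl (P.t j)) hj)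

lemma glue_t_of_not_exists {i : Fin k} (h : ¬ ∃ j, Q.s j = Q.t i) :
    (P.glue Q).t i = .inr ⟨Q.t i, h⟩ :=
  dif_neg h

/-- The points of `Q` that survive in `P.glue Q` restricted to `S`; the source `Q.s j` is
represented in `P.glue Q` by the target `P.t j` it is glued to. -/
def glueRightSet (S : Set (P.glue Q).carrier) : Set Q.carrier :=
  {q | (∃ j, Q.s j = q ∧ Sum.inl (P.t j) ∈ S) ∨ ∃ h, Sum.inr ⟨q, h⟩ ∈ S}

variable {P Q} {S : Set (P.glue Q).carrier}

lemma s_mem_glueRightSet (j : Fin m) : Q.s j ∈ glueRightSet P Q S ↔ Sum.inl (P.t j) ∈ S := by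
  refine ⟨?_, fun h => .inl ⟨j, rfl, h⟩⟩
  rintro (⟨j', hj', h⟩ | ⟨hs, -⟩)
  · rwa [← Q.s_inj hj']
  · exact (hs ⟨j, rfl⟩).elim

lemma mem_glueRightSet_of_not_exists {q : Q.carrier} (hq : ¬ ∃ j, Q.s j = q) :
    q ∈ glueRightSet P Q S ↔ Sum.inr ⟨q, hq⟩ ∈ S := by
  refine ⟨?_, fun h => .inr ⟨hq, h⟩⟩
  rintro (⟨j, hj, -⟩ | ⟨_, h⟩)
  · exact (hq ⟨j, hj⟩).elim
  · exact h

lemma t_mem_glueRightSet (i : Fin k) :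
    Q.t i ∈ glueRightSet P Q S ↔ (P.glue Q).t i ∈ S := by
  by_cases h : ∃ j, Q.s j = Q.t i
  · obtain ⟨j, hj⟩ := h
    rw [← hj, s_mem_glueRightSet, glue_t_of_s_eq P Q hj]
    rfl
  · rw [mem_glueRightSet_of_not_exists h, glue_t_of_not_exists P Q h]
    rfl

end glue

variable {n m n' m' : ℕ}

/-- An isomorphism of `R` onto the sub-iposet of `Q` induced on `S`, whose interfaces are the
interface points of `Q` lying in `S`, in their original order. -/
structure Restriction (Q : Iposet n m) (S : Set Q.carrier) (R : Iposet n' m') where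
  emb : R.carrier ↪ Q.carrier
  range_emb : Set.range emb = S
  lt_iff : ∀ a b, R.lt a b ↔ Q.lt (emb a) (emb b)
  es : Fin n' ↪o Fin n
  et : Fin m' ↪o Fin m
  range_es : Set.range es = Q.s ⁻¹' S
  range_et : Set.range et = Q.t ⁻¹' S
  emb_s : ∀ k, emb (R.s k) = Q.s (es k)
  emb_t : ∀ k, emb (R.t k) = Q.t (et k)

namespace Restriction

variable {Q : Iposet n m} {S : Set Q.carrier} {R : Iposet n' m'}

lemma emb_mem (D : Restriction Q S R) (y : R.carrier) : D.emb y ∈ S :=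
  D.range_emb.subset ⟨y, rfl⟩

lemma exists_s_eq_emb_and (D : Restriction Q S R) (y : R.carrier) (Φ : Fin n → Prop) :
    (∃ i, Q.s i = D.emb y ∧ Φ i) ↔ ∃ k, R.s k = y ∧ Φ (D.es k) := by
  constructor
  · rintro ⟨i, hi, hΦ⟩
    obtain ⟨k, rfl⟩ : i ∈ Set.range D.es := by
      rw [D.range_es, Set.mem_preimage, hi]
      exact D.emb_mem y
    exact ⟨k, D.emb.injective (by rw [D.emb_s, hi]), hΦ⟩
  · rintro ⟨k, rfl, hΦ⟩
    exact ⟨D.es k, (D.emb_s k).symm, hΦ⟩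

lemma exists_t_eq_emb_and (D : Restriction Q S R) (y : R.carrier) (Φ : Fin m → Prop) :
    (∃ j, Q.t j = D.emb y ∧ Φ j) ↔ ∃ k, R.t k = y ∧ Φ (D.et k) := by
  constructor
  · rintro ⟨j, hj, hΦ⟩
    obtain ⟨k, rfl⟩ : j ∈ Set.range D.et := by
      rw [D.range_et, Set.mem_preimage, hj]
      exact D.emb_mem y
    exact ⟨k, D.emb.injective (by rw [D.emb_t, hj]), hΦ⟩
  · rintro ⟨k, rfl, hΦ⟩
    exact ⟨D.et k, (D.emb_t k).symm, hΦ⟩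

lemma exists_s_eq_emb (D : Restriction Q S R) (y : R.carrier) :
    (∃ i, Q.s i = D.emb y) ↔ ∃ k, R.s k = y := by
  simpa using D.exists_s_eq_emb_and y (fun _ => True)

lemma exists_t_eq_emb (D : Restriction Q S R) (y : R.carrier) :
    (∃ j, Q.t j = D.emb y) ↔ ∃ k, R.t k = y := by
  simpa using D.exists_t_eq_emb_and y (fun _ => True)

def ofForallMem (hS : ∀ y, y ∈ S) : Restriction Q S Q where
  emb := Function.Embedding.refl _
  range_emb := by ext y; simp [hS]
  lt_iff _ _ := Iff.rfl
  es := RelEmbedding.refl _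
  et := RelEmbedding.refl _
  range_es := by simp [Set.eq_univ_iff_forall.mpr hS]
  range_et := by simp [Set.eq_univ_iff_forall.mpr hS]
  emb_s _ := rfl
  emb_t _ := rfl

def ofForallNotMem (hS : ∀ y, y ∉ S) : Restriction Q S ipoEmpty where
  emb := ⟨PEmpty.elim, fun a => a.elim⟩
  range_emb := by ext y; exact ⟨fun ⟨a, _⟩ => a.elim, fun h => (hS y h).elim⟩
  lt_iff a := a.elim
  es := ⟨⟨Fin.elim0, fun a => a.elim0⟩, fun {a} => a.elim0⟩
  et := ⟨⟨Fin.elim0, fun a => a.elim0⟩, fun {a} => a.elim0⟩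
  range_es := by ext i; simp [hS]
  range_et := by ext i; simp [hS]
  emb_s k := k.elim0
  emb_t k := k.elim0

def ofIso {P : Iposet n m} (g : P.carrier ≃ Q.carrier)
    (hlt : ∀ a b, P.lt a b ↔ Q.lt (g a) (g b)) (hs : g ∘ P.s = Q.s) (ht : g ∘ P.t = Q.t)
    (D : Restriction P (g ⁻¹' S) R) : Restriction Q S R where
  emb := D.emb.trans g.toEmbedding
  range_emb := by
    rw [Function.Embedding.coe_trans, Set.range_comp, D.range_emb]
    exact g.image_preimage S
  lt_iff a b := (D.lt_iff a b).trans (hlt _ _)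
  es := D.es
  et := D.et
  range_es := by rw [D.range_es, ← hs, Set.preimage_comp]
  range_et := by rw [D.range_et, ← ht, Set.preimage_comp]
  emb_s k := by simp [D.emb_s, ← hs]
  emb_t k := by simp [D.emb_t, ← ht]

def par {n₁ m₁ n₂ m₂ n₁' m₁' n₂' m₂' : ℕ} {P : Iposet n₁ m₁} {Q : Iposet n₂ m₂}
    {P' : Iposet n₁' m₁'} {Q' : Iposet n₂' m₂'} {S : Set (P.par Q).carrier}
    (DP : Restriction P (Sum.inl ⁻¹' S) P') (DQ : Restriction Q (Sum.inr ⁻¹' S) Q') :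
    Restriction (P.par Q) S (P'.par Q') where
  emb := DP.emb.sumMap DQ.emb
  range_emb := by
    change Set.range (Sum.map DP.emb DQ.emb) = (S : Set (P.carrier ⊕ Q.carrier))
    ext (z | z)
    · exact Iff.trans (by simp) (Set.ext_iff.mp DP.range_emb z)
    · exact Iff.trans (by simp) (Set.ext_iff.mp DQ.range_emb z)
  lt_iff
    | .inl a, .inl b => DP.lt_iff a b
    | .inr a, .inr b => DQ.lt_iff a b
    | .inl _, .inr _ | .inr _, .inl _ => Iff.rfl
  es := DP.es.finAdd DQ.es
  et := DP.et.finAdd DQ.et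
  range_es := by
    ext i
    cases i using Fin.addCases
    · rw [OrderEmbedding.castAdd_mem_range_finAdd, DP.range_es, Set.mem_preimage,
        Set.mem_preimage, par_s_castAdd]; rfl
    · rw [OrderEmbedding.natAdd_mem_range_finAdd, DQ.range_es, Set.mem_preimage,
        Set.mem_preimage, par_s_natAdd]; rfl
  range_et := by
    ext j
    cases j using Fin.addCases
    · rw [OrderEmbedding.castAdd_mem_range_finAdd, DP.range_et, Set.mem_preimage,
        Set.mem_preimage, par_t_castAdd]; rfl
    · rw [OrderEmbedding.natAdd_mem_range_finAdd, DQ.range_et, Set.mem_preimage,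
        Set.mem_preimage, par_t_natAdd]; rfl
  emb_s k := by
    cases k using Fin.addCases
    · rw [par_s_castAdd, OrderEmbedding.finAdd_castAdd, par_s_castAdd]
      exact congrArg Sum.inl (DP.emb_s _)
    · rw [par_s_natAdd, OrderEmbedding.finAdd_natAdd, par_s_natAdd]
      exact congrArg Sum.inr (DQ.emb_s _)
  emb_t k := by
    cases k using Fin.addCases
    · rw [par_t_castAdd, OrderEmbedding.finAdd_castAdd, par_t_castAdd]
      exact congrArg Sum.inl (DP.emb_t _)
    · rw [par_t_natAdd, OrderEmbedding.finAdd_natAdd, par_t_natAdd]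
      exact congrArg Sum.inr (DQ.emb_t _)

def glue {k k' : ℕ} {P : Iposet n m} {Q : Iposet m k} {P' : Iposet n' m'} {Q' : Iposet m' k'}
    {S : Set (P.glue Q).carrier}
    (DP : Restriction P (Sum.inl ⁻¹' S) P') (DQ : Restriction Q (glueRightSet P Q S) Q')
    (hmid : DP.et = DQ.es) :
    Restriction (P.glue Q) S (P'.glue Q') where
  emb := DP.emb.sumMap (DQ.emb.subtypeMap fun q hq => (DQ.exists_s_eq_emb q).not.mpr hq)
  range_emb := by
    change Set.range (Sum.map DP.emb (Subtype.map DQ.emb fun q hq =>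
      (DQ.exists_s_eq_emb q).not.mpr hq)) = (S : Set (P.carrier ⊕ {q // ¬ ∃ j, Q.s j = q}))
    ext (p | ⟨q, hq⟩)
    · exact Iff.trans (by simp) (Set.ext_iff.mp DP.range_emb p)
    · refine Iff.trans ?_ ((Set.ext_iff.mp DQ.range_emb q).trans
        (mem_glueRightSet_of_not_exists hq))
      simp only [Set.mem_range, Sum.exists, Sum.map_inl, Sum.map_inr, reduceCtorEq,
        exists_false, false_or, Sum.inr.injEq, Subtype.exists, Subtype.ext_iff, Subtype.map_coe]
      exact ⟨fun ⟨a, _, ha⟩ => ⟨a, ha⟩,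
        fun ⟨a, ha⟩ => ⟨a, fun h => hq (ha ▸ (DQ.exists_s_eq_emb a).mpr h), ha⟩⟩
  lt_iff
    | .inl a, .inl b => DP.lt_iff a b
    | .inr a, .inr b => DQ.lt_iff a.1 b.1
    | .inr _, .inl _ => Iff.rfl
    | .inl a, .inr b => by
      have key : (∃ i, P.t i = DP.emb a ∧ Q.lt (Q.s i) (DQ.emb b.1)) ↔
          ∃ i, P'.t i = a ∧ Q'.lt (Q'.s i) b.1 := by
        rw [DP.exists_t_eq_emb_and]
        refine exists_congr fun i => and_congr_right fun _ => ?_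
        rw [DQ.lt_iff, DQ.emb_s, hmid]
      exact or_congr (DP.exists_t_eq_emb a).not.symm key.symm
  es := DP.es
  et := DQ.et
  range_es := by
    rw [DP.range_es]
    rfl
  range_et := by
    ext i
    rw [DQ.range_et]
    exact t_mem_glueRightSet i
  emb_s k := congrArg Sum.inl (DP.emb_s k)
  emb_t k := by
    by_cases h : ∃ j, Q'.s j = Q'.t k
    · obtain ⟨j, hj⟩ := h
      rw [glue_t_of_s_eq P' Q' hj,
        glue_t_of_s_eq P Q (j := DQ.es j) (by rw [← DQ.emb_s, hj, DQ.emb_t])]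
      exact congrArg Sum.inl (by rw [DP.emb_t, hmid])
    · have h' : ¬ ∃ j, Q.s j = Q.t (DQ.et k) := by rwa [← DQ.emb_t, DQ.exists_s_eq_emb]
      rw [glue_t_of_not_exists P' Q' h, glue_t_of_not_exists P Q h']
      exact congrArg Sum.inr (Subtype.ext (DQ.emb_t k))

lemma iso_restrict {P : Iposet 0 0} {S : Set P.carrier} (D : Restriction P S R) :
    Iso R (P.restrict S) := by
  have hn : n' = 0 := by simpa using Fintype.card_le_of_embedding D.es.toEmbedding
  have hm : m' = 0 := by simpa using Fintype.card_le_of_embedding D.et.toEmbedding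
  subst hn hm
  exact ⟨rfl, rfl, (Equiv.ofInjective D.emb D.emb.injective).trans (Equiv.setCongr D.range_emb),
    D.lt_iff, fun _ j => j.elim0, fun _ j => j.elim0⟩

end Restriction

lemma IsGP.exists_restriction_of_subsingleton {Q : Iposet n m} (hQ : IsGP Q)
    (hQ₁ : Subsingleton Q.carrier) (S : Set Q.carrier) :
    ∃ (n' m' : ℕ) (R : Iposet n' m'), IsGP R ∧ Nonempty (Restriction Q S R) := by
  by_cases hS : ∀ y, y ∈ S
  · exact ⟨n, m, Q, hQ, ⟨.ofForallMem hS⟩⟩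
  · obtain ⟨y, hy⟩ := not_forall.mp hS
    exact ⟨0, 0, ipoEmpty, .empty, ⟨.ofForallNotMem fun z => Subsingleton.elim z y ▸ hy⟩⟩

lemma IsGP.exists_restriction {Q : Iposet n m} (hQ : IsGP Q) (S : Set Q.carrier) :
    ∃ (n' m' : ℕ) (R : Iposet n' m'), IsGP R ∧ Nonempty (Restriction Q S R) := by
  induction hQ with
  | empty => exact IsGP.empty.exists_restriction_of_subsingleton ⟨fun a => a.elim⟩ S
  | s00 => exact IsGP.s00.exists_restriction_of_subsingleton ⟨fun _ _ => rfl⟩ S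
  | s01 => exact IsGP.s01.exists_restriction_of_subsingleton ⟨fun _ _ => rfl⟩ S
  | s10 => exact IsGP.s10.exists_restriction_of_subsingleton ⟨fun _ _ => rfl⟩ S
  | s11 => exact IsGP.s11.exists_restriction_of_subsingleton ⟨fun _ _ => rfl⟩ S
  | @glue _ _ _ P Q _ _ ihP ihQ =>
    obtain ⟨_, _, P', hP', ⟨DP⟩⟩ := ihP (Sum.inl ⁻¹' S)
    obtain ⟨_, _, Q', hQ', ⟨DQ⟩⟩ := ihQ (glueRightSet P Q S)
    have hmid : Set.range DP.et = Set.range DQ.es := by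
      ext j
      rw [DP.range_et, DQ.range_es]
      exact (s_mem_glueRightSet j).symm
    obtain rfl := OrderEmbedding.card_eq_of_range_eq hmid
    exact ⟨_, _, P'.glue Q', hP'.glue hQ', ⟨DP.glue DQ (OrderEmbedding.range_inj.mp hmid)⟩⟩
  | par _ _ ihP ihQ =>
    obtain ⟨_, _, P', hP', ⟨DP⟩⟩ := ihP (Sum.inl ⁻¹' S)
    obtain ⟨_, _, Q', hQ', ⟨DQ⟩⟩ := ihQ (Sum.inr ⁻¹' S)
    exact ⟨_, _, P'.par Q', hP'.par hQ', ⟨DP.par DQ⟩⟩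
  | iso _ hiso ih =>
    obtain ⟨rfl, rfl, g, hlt, hs, ht⟩ := hiso
    obtain ⟨_, _, R, hR, ⟨D⟩⟩ := ih (g ⁻¹' S)
    exact ⟨_, _, R, hR,
      ⟨D.ofIso g hlt (funext fun i => hs i i rfl) (funext fun j => ht j j rfl)⟩⟩

lemma IsGP.restrict {P : Iposet 0 0} (hP : IsGP P) (S : Set P.carrier) : IsGP (P.restrict S) := by
  obtain ⟨_, _, R, hR, ⟨D⟩⟩ := hP.exists_restriction S
  exact hR.iso D.iso_restrict

end Iposet

open Iposet in
/-- Gluing-parallel posets are closed under induced subposets: removing a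
point from a gp-poset yields a gp-poset. -/
theorem gp_closed_under_point_removal (P : Iposet 0 0) (hP : IsGP P)
    (x : P.carrier) :
    IsGP (P.restrict {y | y ≠ x}) :=
  hP.restrict _
end
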